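/- The semitopological semilattice (X,τ) is Lawson: the base ℬ = {V_α(x) : x ∈ X, α ∈ [‖x‖,λ)} of the topology τ consists of subsemilattices of X, i.e., each V_α(x) is closed under the pointwise minimum operation. -/

import Mathlib

/-!
Each clause defining `V_α(x)` survives pointwise minimum: agreement with `x` on `[1, α)`
because `min a a = a`, avoiding the value `1` because `{0, 2}` is closed under `min`, the
conditions on `‖y‖` because `‖min y z‖ = max ‖y‖ ‖z‖`, and the value `1` at the last point
`‖y‖ - 1` of the support because the argument of smaller norm is already `2` there.
For openness, a point `y ∈ V_α(x)` outside `X_2` lies in the same `X_i` as `x`, and then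
`V_β(y) ⊆ V_α(x)` for `β = max α ‖y‖`.
-/

universe u v

open Ordinal Set Topology Cardinal

namespace LawsonExample

def Xset (lam : Cardinal.{u}) : Set (Ordinal.{u} → Fin 3) :=
  {x | (∀ γ : Ordinal.{u}, lam.ord ≤ γ → x γ = 2) ∧ {γ : Ordinal.{u} | x γ ≠ 2}.Finite}

noncomputable def nrm (x : Ordinal.{u} → Fin 3) : Ordinal.{u} :=
  sInf {α | ∀ γ, α ≤ γ → x γ = 2}

noncomputable def Vnbhd (lam : Cardinal.{u}) (x : ↥(Xset lam)) (α : Ordinal.{u}) :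
    Set ↥(Xset lam) :=
  if x.1 0 = 2 then {x}
  else if x.1 0 = 1 then
    {y | (∀ γ, 1 ≤ γ → γ < α → y.1 γ = x.1 γ) ∧
         (∀ γ, α ≤ γ → γ < lam.ord → y.1 γ ≠ 1) ∧
         (y.1 0 = 1 ∨ (y.1 0 = 2 ∧ α < nrm y.1))}
  else
    {y | (∀ γ, 1 ≤ γ → γ < α → y.1 γ = x.1 γ) ∧
         (y.1 0 = 0 ∨ (y.1 0 = 2 ∧ α < nrm y.1 ∧ y.1 (Ordinal.pred (nrm y.1)) = 1))}

def tauSet (lam : Cardinal.{u}) : Set (Set ↥(Xset lam)) :=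
  {U | ∀ x ∈ U, ∃ α : Ordinal.{u}, nrm x.1 ≤ α ∧ α < lam.ord ∧ Vnbhd lam x α ⊆ U}

lemma nrm_spec {lam : Cardinal.{u}} (x : ↥(Xset lam)) {γ : Ordinal.{u}}
    (h : nrm x.1 ≤ γ) : x.1 γ = 2 := by
  have hne : {α : Ordinal.{u} | ∀ γ, α ≤ γ → x.1 γ = 2}.Nonempty :=
    ⟨lam.ord, fun γ hγ => x.2.1 γ hγ⟩
  exact csInf_mem hne γ h

lemma nrm_lt {lam : Cardinal.{u}} (hlam : ℵ₀ ≤ lam) (x : ↥(Xset lam)) :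
    nrm x.1 < lam.ord := by
  have hlim : Order.IsSuccLimit lam.ord := Cardinal.isSuccLimit_ord hlam
  rcases eq_empty_or_nonempty {γ | x.1 γ ≠ 2} with he | hne
  · have h0 : nrm x.1 ≤ 0 := csInf_le' (fun γ _ => by
      by_contra hc
      exact (eq_empty_iff_forall_notMem.1 he γ) hc)
    exact lt_of_le_of_lt h0 hlim.pos
  · set m := sSup {γ | x.1 γ ≠ 2} with hm_def
    have hmem : m ∈ {γ | x.1 γ ≠ 2} := hne.csSup_mem x.2.2
    have hm : m < lam.ord := lt_of_not_ge fun h => hmem (x.2.1 m h)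
    have hb : nrm x.1 ≤ m + 1 := csInf_le' (fun γ hγ => by
      by_contra hc
      have hle : γ ≤ m := le_csSup x.2.2.bddAbove hc
      rw [Ordinal.add_one_eq_succ] at hγ
      exact absurd hγ (not_le.2 (lt_of_le_of_lt hle (Order.lt_succ m))))
    have : m + 1 < lam.ord := by
      rw [Ordinal.add_one_eq_succ]; exact hlim.succ_lt hm
    exact lt_of_le_of_lt hb this

lemma fin3_cases (a : Fin 3) : a = 0 ∨ a = 1 ∨ a = 2 := by revert a; decide

lemma mem_Vnbhd_self {lam : Cardinal.{u}} (x : ↥(Xset lam)) {α : Ordinal.{u}}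
    (h : nrm x.1 ≤ α) : x ∈ Vnbhd lam x α := by
  rcases fin3_cases (x.1 0) with h0 | h0 | h0
  · have h2 : x.1 0 ≠ 2 := by rw [h0]; decide
    have h1 : x.1 0 ≠ 1 := by rw [h0]; decide
    rw [Vnbhd, if_neg h2, if_neg h1]
    exact ⟨fun γ _ _ => rfl, Or.inl h0⟩
  · have h2 : x.1 0 ≠ 2 := by rw [h0]; decide
    rw [Vnbhd, if_neg h2, if_pos h0]
    refine ⟨fun γ _ _ => rfl, fun γ hγ _ => ?_, Or.inl h0⟩
    rw [nrm_spec x (le_trans h hγ)]; decide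
  · rw [Vnbhd, if_pos h0]; exact rfl

lemma Vnbhd_mono {lam : Cardinal.{u}} (x : ↥(Xset lam)) {α β : Ordinal.{u}}
    (hα : nrm x.1 ≤ α) (hαβ : α ≤ β) : Vnbhd lam x β ⊆ Vnbhd lam x α := by
  rcases fin3_cases (x.1 0) with h0 | h0 | h0
  · have h2 : x.1 0 ≠ 2 := by rw [h0]; decide
    have h1 : x.1 0 ≠ 1 := by rw [h0]; decide
    rw [Vnbhd, Vnbhd, if_neg h2, if_neg h1, if_neg h2, if_neg h1]
    rintro y ⟨hr, hy⟩
    refine ⟨fun γ h1γ h2γ => hr γ h1γ (lt_of_lt_of_le h2γ hαβ), ?_⟩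
    rcases hy with hy | ⟨hy2, hylt, hyp⟩
    · exact Or.inl hy
    · exact Or.inr ⟨hy2, lt_of_le_of_lt hαβ hylt, hyp⟩
  · have h2 : x.1 0 ≠ 2 := by rw [h0]; decide
    rw [Vnbhd, Vnbhd, if_neg h2, if_pos h0, if_neg h2, if_pos h0]
    rintro y ⟨hr, hns, hy⟩
    have hα1 : 1 ≤ α := by
      by_contra hc
      have : α = 0 := Ordinal.lt_one_iff_zero.1 (not_le.1 hc)
      have : x.1 0 = 2 := nrm_spec x (by rw [← this]; exact hα)
      exact h2 this
    refine ⟨fun γ h1γ h2γ => hr γ h1γ (lt_of_lt_of_le h2γ hαβ), ?_, ?_⟩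
    · intro γ hγ hγlt
      by_cases hγβ : β ≤ γ
      · exact hns γ hγβ hγlt
      · have h1γ : 1 ≤ γ := le_trans hα1 hγ
        rw [hr γ h1γ (not_le.1 hγβ)]
        rw [nrm_spec x (le_trans hα hγ)]
        decide
    · rcases hy with hy | ⟨hy2, hylt⟩
      · exact Or.inl hy
      · exact Or.inr ⟨hy2, lt_of_le_of_lt hαβ hylt⟩
  · rw [Vnbhd, Vnbhd, if_pos h0, if_pos h0]

noncomputable def tau (lam : Cardinal.{u}) (hlam : ℵ₀ ≤ lam) :
    TopologicalSpace ↥(Xset lam) where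
  IsOpen U := U ∈ tauSet lam
  isOpen_univ := fun x _ =>
    ⟨nrm x.1, le_rfl, nrm_lt hlam x, subset_univ _⟩
  isOpen_inter := by
    intro U V hU hV x hx
    obtain ⟨α, hα1, hα2, hα3⟩ := hU x hx.1
    obtain ⟨β, hβ1, hβ2, hβ3⟩ := hV x hx.2
    refine ⟨max α β, le_trans hα1 (le_max_left _ _), max_lt hα2 hβ2, fun y hy => ?_⟩
    exact ⟨hα3 (Vnbhd_mono x hα1 (le_max_left _ _) hy),
           hβ3 (Vnbhd_mono x hβ1 (le_max_right _ _) hy)⟩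
  isOpen_sUnion := by
    intro S hS x hx
    obtain ⟨U, hU, hxU⟩ := hx
    obtain ⟨α, hα1, hα2, hα3⟩ := hS U hU x hxU
    exact ⟨α, hα1, hα2, fun y hy => ⟨U, hU, hα3 hy⟩⟩


/-- The semilattice operation of `X`: pointwise minimum. -/
noncomputable def pmin (lam : Cardinal.{u}) (x y : ↥(Xset lam)) : ↥(Xset lam) :=
  ⟨fun γ => min (x.1 γ) (y.1 γ), by
    constructor
    · intro γ hγ
      show min (x.1 γ) (y.1 γ) = 2
      rw [x.2.1 γ hγ, y.2.1 γ hγ, min_self]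
    · refine (x.2.2.union y.2.2).subset fun γ hγ => ?_
      have hγ' : min (x.1 γ) (y.1 γ) ≠ 2 := hγ
      simp only [mem_union, mem_setOf_eq]
      by_contra hc
      push_neg at hc
      rw [hc.1, hc.2, min_self] at hγ'
      exact hγ' rfl⟩

/-- `B` is a base of the topology `t`: it consists of open sets, and every open set is a
union of members of `B`. -/
def IsBase {X : Type v} (t : TopologicalSpace X) (B : Set (Set X)) : Prop :=
  (∀ U ∈ B, IsOpen[t] U) ∧ ∀ U, IsOpen[t] U → ∃ S ⊆ B, U = ⋃₀ S

/-- The family `ℬ = {V_α(x) : x ∈ X, α ∈ [‖x‖, λ)}`. -/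
def Vfamily (lam : Cardinal.{u}) : Set (Set ↥(Xset lam)) :=
  {W | ∃ (x : ↥(Xset lam)) (α : Ordinal.{u}), nrm x.1 ≤ α ∧ α < lam.ord ∧ W = Vnbhd lam x α}

/-- The weight of a topological space: the smallest cardinality of a base of its topology. -/
noncomputable def weight {X : Type v} (t : TopologicalSpace X) : Cardinal.{v} :=
  sInf {c : Cardinal.{v} | ∃ B : Set (Set X), IsBase t B ∧ c = Cardinal.mk ↥B}

/-- The function `𝟎_β`, with `𝟎_β β = 0` and `𝟎_β γ = 2` for `γ ≠ β`. -/
noncomputable def zeroF (β : Ordinal.{u}) : Ordinal.{u} → Fin 3 :=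
  fun γ => if γ = β then 0 else 2

/-- The function `𝟏_β`, with `𝟏_β β = 1` and `𝟏_β γ = 2` for `γ ≠ β`. -/
noncomputable def oneF (β : Ordinal.{u}) : Ordinal.{u} → Fin 3 :=
  fun γ => if γ = β then 1 else 2

lemma zeroF_mem (lam : Cardinal.{u}) {β : Ordinal.{u}} (h : β < lam.ord) :
    zeroF β ∈ Xset lam := by
  constructor
  · intro γ hγ
    have hne : γ ≠ β := fun e => absurd h (not_lt.2 (e ▸ hγ))
    simp [zeroF, hne]
  · refine (finite_singleton β).subset fun γ hγ => ?_
    simp only [mem_setOf_eq, zeroF] at hγ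
    by_contra hc
    simp only [mem_singleton_iff] at hc
    rw [if_neg hc] at hγ
    exact hγ rfl

lemma oneF_mem (lam : Cardinal.{u}) {β : Ordinal.{u}} (h : β < lam.ord) :
    oneF β ∈ Xset lam := by
  constructor
  · intro γ hγ
    have hne : γ ≠ β := fun e => absurd h (not_lt.2 (e ▸ hγ))
    simp [oneF, hne]
  · refine (finite_singleton β).subset fun γ hγ => ?_
    simp only [mem_setOf_eq, oneF] at hγ
    by_contra hc
    simp only [mem_singleton_iff] at hc
    rw [if_neg hc] at hγ
    exact hγ rfl

/-- `𝟎_β` as an element of `X` (for `β < λ`). -/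
noncomputable def zeroE (lam : Cardinal.{u}) {β : Ordinal.{u}} (h : β < lam.ord) :
    ↥(Xset lam) := ⟨zeroF β, zeroF_mem lam h⟩

/-- `𝟏_β` as an element of `X` (for `β < λ`). -/
noncomputable def oneE (lam : Cardinal.{u}) {β : Ordinal.{u}} (h : β < lam.ord) :
    ↥(Xset lam) := ⟨oneF β, oneF_mem lam h⟩

lemma fin3_min_ne_one {a b : Fin 3} (ha : a ≠ 1) (hb : b ≠ 1) : min a b ≠ 1 := by
  revert a b; decide

lemma fin3_min_eq_two_iff {a b : Fin 3} : min a b = 2 ↔ a = 2 ∧ b = 2 := by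
  revert a b; decide

section Norm

variable {lam : Cardinal.{u}}

lemma nrm_le_of_forall (x : ↥(Xset lam)) {α : Ordinal.{u}} (h : ∀ γ, α ≤ γ → x.1 γ = 2) :
    nrm x.1 ≤ α :=
  csInf_le' h

lemma lt_nrm_of_ne_two (x : ↥(Xset lam)) {γ : Ordinal.{u}} (h : x.1 γ ≠ 2) : γ < nrm x.1 :=
  lt_of_not_ge fun hγ => h (nrm_spec x hγ)

lemma one_le_nrm_of_ne_two (x : ↥(Xset lam)) (h : x.1 0 ≠ 2) : 1 ≤ nrm x.1 :=
  Order.one_le_iff_pos.2 (lt_nrm_of_ne_two x h)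

lemma eq_two_at_pred_nrm (x y : ↥(Xset lam)) (hx : x.1 (Ordinal.pred (nrm x.1)) ≠ 2)
    (hyx : nrm y.1 < nrm x.1) : y.1 (Ordinal.pred (nrm x.1)) = 2 := by
  have hsucc : Order.succ (Ordinal.pred (nrm x.1)) = nrm x.1 :=
    Ordinal.succ_pred_eq_iff_not_isSuccPrelimit.2
      (Ordinal.pred_lt_iff_not_isSuccPrelimit.1 (lt_nrm_of_ne_two x hx))
  rw [← hsucc] at hyx
  exact nrm_spec y (Order.lt_succ_iff.1 hyx)

end Norm

section Pmin

variable {lam : Cardinal.{u}}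

@[simp]
lemma pmin_apply (y z : ↥(Xset lam)) (γ : Ordinal.{u}) :
    (pmin lam y z).1 γ = min (y.1 γ) (z.1 γ) :=
  rfl

lemma pmin_comm (y z : ↥(Xset lam)) : pmin lam y z = pmin lam z y :=
  Subtype.ext (funext fun _ => min_comm _ _)

lemma pmin_self (y : ↥(Xset lam)) : pmin lam y y = y :=
  Subtype.ext (funext fun _ => min_self _)

lemma nrm_pmin (y z : ↥(Xset lam)) :
    nrm (pmin lam y z).1 = max (nrm y.1) (nrm z.1) := by
  apply le_antisymm
  · refine nrm_le_of_forall _ fun γ hγ => ?_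
    rw [pmin_apply, nrm_spec y (le_of_max_le_left hγ), nrm_spec z (le_of_max_le_right hγ),
      min_self]
  · have h2 : ∀ γ, nrm (pmin lam y z).1 ≤ γ → y.1 γ = 2 ∧ z.1 γ = 2 := fun γ hγ =>
      fin3_min_eq_two_iff.1 (nrm_spec (pmin lam y z) hγ)
    exact max_le (nrm_le_of_forall y fun γ hγ => (h2 γ hγ).1)
      (nrm_le_of_forall z fun γ hγ => (h2 γ hγ).2)

lemma pmin_apply_pred_nrm_of_le {y z : ↥(Xset lam)} (hyz : nrm y.1 ≤ nrm z.1)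
    (hy : y.1 (Ordinal.pred (nrm y.1)) = 1) (hz : z.1 (Ordinal.pred (nrm z.1)) = 1) :
    (pmin lam y z).1 (Ordinal.pred (nrm (pmin lam y z).1)) = 1 := by
  rw [nrm_pmin, max_eq_right hyz, pmin_apply]
  rcases hyz.eq_or_lt with heq | hlt
  · rw [← heq, hy, heq, hz, min_self]
  · rw [eq_two_at_pred_nrm z y (by rw [hz]; decide) hlt, hz]; decide

lemma pmin_apply_pred_nrm {y z : ↥(Xset lam)}
    (hy : y.1 (Ordinal.pred (nrm y.1)) = 1) (hz : z.1 (Ordinal.pred (nrm z.1)) = 1) :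
    (pmin lam y z).1 (Ordinal.pred (nrm (pmin lam y z).1)) = 1 := by
  rcases le_total (nrm y.1) (nrm z.1) with hyz | hzy
  · exact pmin_apply_pred_nrm_of_le hyz hy hz
  · rw [pmin_comm]; exact pmin_apply_pred_nrm_of_le hzy hz hy

end Pmin

section Neighbourhoods

variable {lam : Cardinal.{u}} {x y : ↥(Xset lam)} {α : Ordinal.{u}}

lemma Vnbhd_of_two (hx : x.1 0 = 2) : Vnbhd lam x α = {x} := by
  rw [Vnbhd, if_pos hx]

lemma mem_Vnbhd_of_one (hx : x.1 0 = 1) :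
    y ∈ Vnbhd lam x α ↔ (∀ γ, 1 ≤ γ → γ < α → y.1 γ = x.1 γ) ∧
      (∀ γ, α ≤ γ → γ < lam.ord → y.1 γ ≠ 1) ∧
      (y.1 0 = 1 ∨ (y.1 0 = 2 ∧ α < nrm y.1)) := by
  rw [Vnbhd, if_neg (by rw [hx]; decide), if_pos hx]; rfl

lemma mem_Vnbhd_of_zero (hx : x.1 0 = 0) :
    y ∈ Vnbhd lam x α ↔ (∀ γ, 1 ≤ γ → γ < α → y.1 γ = x.1 γ) ∧
      (y.1 0 = 0 ∨ (y.1 0 = 2 ∧ α < nrm y.1 ∧ y.1 (Ordinal.pred (nrm y.1)) = 1)) := by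
  rw [Vnbhd, if_neg (by rw [hx]; decide), if_neg (by rw [hx]; decide)]; rfl

lemma apply_zero_eq_of_mem_Vnbhd (hy : y ∈ Vnbhd lam x α) (hy2 : y.1 0 ≠ 2) :
    y.1 0 = x.1 0 := by
  rcases fin3_cases (x.1 0) with hx0 | hx0 | hx0
  · obtain ⟨-, hy0 | ⟨h2, -⟩⟩ := (mem_Vnbhd_of_zero hx0).1 hy
    exacts [hy0.trans hx0.symm, absurd h2 hy2]
  · obtain ⟨-, -, hy0 | ⟨h2, -⟩⟩ := (mem_Vnbhd_of_one hx0).1 hy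
    exacts [hy0.trans hx0.symm, absurd h2 hy2]
  · rw [Vnbhd_of_two hx0, mem_singleton_iff] at hy
    rw [hy]

lemma Vnbhd_subset_of_mem (hα : nrm x.1 ≤ α) (hy : y ∈ Vnbhd lam x α) :
    Vnbhd lam y (max α (nrm y.1)) ⊆ Vnbhd lam x α := by
  by_cases hy2 : y.1 0 = 2
  · rw [Vnbhd_of_two hy2, singleton_subset_iff]
    exact hy
  have hyx0 := apply_zero_eq_of_mem_Vnbhd hy hy2
  rcases fin3_cases (x.1 0) with hx0 | hx0 | hx0
  · obtain ⟨hyx, -⟩ := (mem_Vnbhd_of_zero hx0).1 hy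
    intro z hz
    obtain ⟨hzy, hz0⟩ := (mem_Vnbhd_of_zero (hyx0.trans hx0)).1 hz
    refine (mem_Vnbhd_of_zero hx0).2 ⟨fun γ h1 hγ => ?_, ?_⟩
    · rw [hzy γ h1 (lt_max_of_lt_left hγ), hyx γ h1 hγ]
    · exact hz0.imp_right fun ⟨h2, hlt, hpred⟩ => ⟨h2, (le_max_left _ _).trans_lt hlt, hpred⟩
  · obtain ⟨hyx, hy1, -⟩ := (mem_Vnbhd_of_one hx0).1 hy
    have hα1 : 1 ≤ α := (one_le_nrm_of_ne_two x (by rw [hx0]; decide)).trans hα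
    intro z hz
    obtain ⟨hzy, hz1, hz0⟩ := (mem_Vnbhd_of_one (hyx0.trans hx0)).1 hz
    refine (mem_Vnbhd_of_one hx0).2 ⟨fun γ h1 hγ => ?_, fun γ hγ hγl => ?_, ?_⟩
    · rw [hzy γ h1 (lt_max_of_lt_left hγ), hyx γ h1 hγ]
    · by_cases hγy : max α (nrm y.1) ≤ γ
      · exact hz1 γ hγy hγl
      · rw [hzy γ (hα1.trans hγ) (not_le.1 hγy)]
        exact hy1 γ hγ hγl
    · exact hz0.imp_right fun ⟨h2, hlt⟩ => ⟨h2, (le_max_left _ _).trans_lt hlt⟩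
  · exact absurd (hyx0.trans hx0) hy2

lemma Vnbhd_mem_tauSet (hlam : ℵ₀ ≤ lam) (hα : nrm x.1 ≤ α) (hαl : α < lam.ord) :
    Vnbhd lam x α ∈ tauSet lam := fun y hy =>
  ⟨max α (nrm y.1), le_max_right _ _, max_lt hαl (nrm_lt hlam y), Vnbhd_subset_of_mem hα hy⟩

lemma isBase_Vfamily (hlam : ℵ₀ ≤ lam) : IsBase (tau lam hlam) (Vfamily lam) := by
  refine ⟨fun U ⟨x, α, hα, hαl, hU⟩ => hU ▸ Vnbhd_mem_tauSet hlam hα hαl, fun U hU => ?_⟩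
  refine ⟨{W | W ∈ Vfamily lam ∧ W ⊆ U}, fun W hW => hW.1, ?_⟩
  refine Subset.antisymm (fun y hy => ?_) (sUnion_subset fun W hW => hW.2)
  obtain ⟨α, hα, hαl, hαU⟩ := hU y hy
  exact ⟨Vnbhd lam y α, ⟨⟨y, α, hα, hαl, rfl⟩, hαU⟩, mem_Vnbhd_self y hα⟩

variable {z : ↥(Xset lam)}

lemma pmin_mem_Vnbhd_of_zero (hx0 : x.1 0 = 0) (hy : y ∈ Vnbhd lam x α)
    (hz : z ∈ Vnbhd lam x α) : pmin lam y z ∈ Vnbhd lam x α := by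
  obtain ⟨hyx, hy0⟩ := (mem_Vnbhd_of_zero hx0).1 hy
  obtain ⟨hzx, hz0⟩ := (mem_Vnbhd_of_zero hx0).1 hz
  refine (mem_Vnbhd_of_zero hx0).2 ⟨fun γ h1 hγ => ?_, ?_⟩
  · rw [pmin_apply, hyx γ h1 hγ, hzx γ h1 hγ, min_self]
  rcases hy0 with hy0 | ⟨hy2, hyα, hy1⟩ <;> rcases hz0 with hz0 | ⟨hz2, hzα, hz1⟩
  · left; simp [hy0, hz0]
  · left; simp [hy0, hz2]
  · left; simp [hy2, hz0]
  · right
    refine ⟨by simp [hy2, hz2], ?_, pmin_apply_pred_nrm hy1 hz1⟩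
    rw [nrm_pmin]
    exact lt_max_of_lt_left hyα

lemma pmin_mem_Vnbhd_of_one (hx0 : x.1 0 = 1) (hy : y ∈ Vnbhd lam x α)
    (hz : z ∈ Vnbhd lam x α) : pmin lam y z ∈ Vnbhd lam x α := by
  obtain ⟨hyx, hy1, hy0⟩ := (mem_Vnbhd_of_one hx0).1 hy
  obtain ⟨hzx, hz1, hz0⟩ := (mem_Vnbhd_of_one hx0).1 hz
  refine (mem_Vnbhd_of_one hx0).2 ⟨fun γ h1 hγ => ?_,
    fun γ hγ hγl => fin3_min_ne_one (hy1 γ hγ hγl) (hz1 γ hγ hγl), ?_⟩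
  · rw [pmin_apply, hyx γ h1 hγ, hzx γ h1 hγ, min_self]
  rcases hy0 with hy0 | ⟨hy2, hyα⟩ <;> rcases hz0 with hz0 | ⟨hz2, hzα⟩
  · left; simp [hy0, hz0]
  · left; simp [hy0, hz2]
  · left; simp [hy2, hz0]
  · right
    refine ⟨by simp [hy2, hz2], ?_⟩
    rw [nrm_pmin]
    exact lt_max_of_lt_left hyα

lemma pmin_mem_Vnbhd (hy : y ∈ Vnbhd lam x α) (hz : z ∈ Vnbhd lam x α) :
    pmin lam y z ∈ Vnbhd lam x α := by
  rcases fin3_cases (x.1 0) with hx0 | hx0 | hx0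
  · exact pmin_mem_Vnbhd_of_zero hx0 hy hz
  · exact pmin_mem_Vnbhd_of_one hx0 hy hz
  · rw [Vnbhd_of_two hx0, mem_singleton_iff] at hy hz ⊢
    rw [hy, hz, pmin_self]

end Neighbourhoods

/-- The semitopological semilattice `(X, τ)` is Lawson: the base
`ℬ = {V_α(x) : x ∈ X, α ∈ [‖x‖, λ)}` of the topology `τ` consists of subsemilattices of `X`,
i.e. each `V_α(x)` is closed under the pointwise minimum operation. -/
theorem lawson_tau (lam : Cardinal.{u}) (hlam : ℵ₀ ≤ lam) :
    IsBase (tau lam hlam) (Vfamily lam) ∧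
    ∀ (x : ↥(Xset lam)) (α : Ordinal.{u}), nrm x.1 ≤ α → α < lam.ord →
      ∀ y ∈ Vnbhd lam x α, ∀ z ∈ Vnbhd lam x α, pmin lam y z ∈ Vnbhd lam x α :=
  ⟨isBase_Vfamily hlam, fun _ _ _ _ _ hy _ hz => pmin_mem_Vnbhd hy hz⟩

end LawsonExample
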